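/- Define x : ℕ → ℝ by x 0 = 1 − √3/2 and x (i+1) = 2·(x i)² / (1 − √3·(x i) + √(1 − 2√3·(x i) − (x i)²)); define d i = √((x (i+1))²/4 + (x i + (√3/2)·x (i+1))²), θ i = 2·arcsin(d i / 2), and a i = (x i · x (i+1))/4 − (θ i − sin (θ i))/2. Then 4.288·10⁻⁴⁰ < a 4 < 4.289·10⁻⁴⁰. -/

import Mathlib

noncomputable section

/-- Hansen's recursively defined sequence of distances, in the numerically stable form. -/
def xseq : ℕ → ℝ
  | 0 => 1 - Real.sqrt 3 / 2
  | i + 1 => 2 * (xseq i) ^ 2 /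
      (1 - Real.sqrt 3 * xseq i + Real.sqrt (1 - 2 * Real.sqrt 3 * xseq i - (xseq i) ^ 2))

/-- The chord length of the arc in Hansen's sliver region. -/
def dseq (i : ℕ) : ℝ :=
  Real.sqrt ((xseq (i + 1)) ^ 2 / 4 + (xseq i + Real.sqrt 3 / 2 * xseq (i + 1)) ^ 2)

/-- The angle subtended by the chord at the center of the unit circle. -/
def θseq (i : ℕ) : ℝ := 2 * Real.arcsin (dseq i / 2)

/-- The area of the region bounded by two line segments of lengths `x i` and `x (i+1)`
meeting at an interior angle of 150°, and an arc of a circle of radius 1. -/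
def aseq (i : ℕ) : ℝ := xseq i * xseq (i + 1) / 4 - (θseq i - Real.sin (θseq i)) / 2

/-!
The sequence decays doubly exponentially, `x (i+1) ≈ 2 (x i)²`, so `x₄ ≈ 1.37e-13` and
`x₅ ≈ 1.88e-26`. Rational enclosures of `xseq i` are pushed through the recursion, bracketing
`√3` and each square root by rationals. For a chord this short, `θ₄ = 2 arcsin (d₄ / 2)` agrees
with `d₄` and hence with `x₄` up to `O(x₅)`, and `θ - sin θ = θ³ / 6 + O(θ⁵)`; so
`a₄ ≈ x₄ x₅ / 4 - θ₄³ / 12` is a difference of two terms of size `1e-40`, each known to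
relative precision about `1e-11`.
-/

open Real

lemma Real.self_le_arcsin {t : ℝ} (h0 : 0 ≤ t) (h1 : t ≤ 1) : t ≤ arcsin t :=
  (sin_arcsin (by linarith) h1).symm.trans_le (sin_le (arcsin_nonneg.mpr h0))

lemma Real.arcsin_le_self_add_pow_three {t : ℝ} (h0 : 0 ≤ t) (h1 : t ≤ 1) :
    arcsin t ≤ t + t ^ 3 := by
  have hA0 : 0 ≤ arcsin t := arcsin_nonneg.mpr h0
  have hsin : sin (arcsin t) = t := sin_arcsin (by linarith) h1
  -- Jordan's inequality `2 / π * A ≤ sin A` keeps `A = arcsin t` within a constant factor of `t`.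
  have hjordan : 2 / π * arcsin t ≤ t := (mul_le_sin hA0 (arcsin_le_pi_div_two t)).trans_eq hsin
  have hA : arcsin t ≤ 1.575 * t := by
    rw [div_mul_eq_mul_div, div_le_iff₀ pi_pos] at hjordan
    nlinarith [pi_lt_d2]
  have hcube : arcsin t ^ 3 ≤ (1.575 * t) ^ 3 := pow_le_pow_left₀ hA0 hA 3
  have := (sin_ge_sub_cube hA0).trans_eq hsin
  nlinarith [pow_nonneg h0 3]

lemma Real.sin_le_sub_cube_add_pow_five {θ : ℝ} (h0 : 0 ≤ θ) (h1 : θ ≤ 1) :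
    sin θ ≤ θ - θ ^ 3 / 6 + θ ^ 5 / 100 := by
  have := (abs_le.mp (sin_bound (abs_le.mpr ⟨by linarith, h1⟩))).2
  rw [abs_of_nonneg h0] at this
  linarith

lemma sqrt_three_bounds : 1.7320508075688 < √3 ∧ √3 < 1.7320508075689 :=
  ⟨lt_sqrt_of_sq_lt (by norm_num), (sqrt_lt' (by norm_num)).mpr (by norm_num)⟩

def hansenStep (s x : ℝ) : ℝ := 2 * x ^ 2 / (1 - s * x + √(1 - 2 * s * x - x ^ 2))

lemma xseq_succ (i : ℕ) : xseq (i + 1) = hansenStep √3 (xseq i) := by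
  rw [xseq, hansenStep]

lemma hansenStep_bounds {s x sa sb lo hi rlo rhi : ℝ} (hs : sa < s ∧ s < sb)
    (hx : lo < x ∧ x < hi) (hsa : 0 < sa) (hlo : 0 < lo) (hrhi : 0 < rhi)
    (hrlo_sq : rlo ^ 2 < 1 - 2 * sb * hi - hi ^ 2) (hrhi_sq : 1 - 2 * sa * lo - lo ^ 2 < rhi ^ 2)
    (hden : 0 < 1 - sb * hi + rlo) :
    2 * lo ^ 2 / (1 - sa * lo + rhi) < hansenStep s x ∧
      hansenStep s x < 2 * hi ^ 2 / (1 - sb * hi + rlo) := by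
  obtain ⟨hsl, hsh⟩ := hs
  obtain ⟨hxl, hxh⟩ := hx
  have hsxl : sa * lo < s * x := mul_lt_mul'' hsl hxl hsa.le hlo.le
  have hsxh : s * x < sb * hi := mul_lt_mul'' hsh hxh (by linarith) (by linarith)
  have hsql : lo ^ 2 < x ^ 2 := pow_lt_pow_left₀ hxl hlo.le two_ne_zero
  have hsqh : x ^ 2 < hi ^ 2 := pow_lt_pow_left₀ hxh (by linarith) two_ne_zero
  have hrootl : rlo < √(1 - 2 * s * x - x ^ 2) := lt_sqrt_of_sq_lt (by nlinarith)
  have hrooth : √(1 - 2 * s * x - x ^ 2) < rhi := (sqrt_lt' hrhi).mpr (by nlinarith)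
  unfold hansenStep
  constructor
  · exact div_lt_div₀ (by nlinarith) (by linarith) (by positivity) (by linarith)
  · exact div_lt_div₀ (by nlinarith) (by linarith) (by positivity) hden

lemma xseq_succ_bounds {i : ℕ} {lo hi rlo rhi nlo nhi : ℝ} (hx : lo < xseq i ∧ xseq i < hi)
    (hlo : 0 < lo) (hrhi : 0 < rhi)
    (hrlo_sq : rlo ^ 2 < 1 - 2 * 1.7320508075689 * hi - hi ^ 2)
    (hrhi_sq : 1 - 2 * 1.7320508075688 * lo - lo ^ 2 < rhi ^ 2)
    (hden : 0 < 1 - 1.7320508075689 * hi + rlo)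
    (hnlo : nlo ≤ 2 * lo ^ 2 / (1 - 1.7320508075688 * lo + rhi))
    (hnhi : 2 * hi ^ 2 / (1 - 1.7320508075689 * hi + rlo) ≤ nhi) :
    nlo < xseq (i + 1) ∧ xseq (i + 1) < nhi := by
  rw [xseq_succ]
  obtain ⟨hl, hh⟩ :=
    hansenStep_bounds sqrt_three_bounds hx (by norm_num) hlo hrhi hrlo_sq hrhi_sq hden
  exact ⟨hnlo.trans_lt hl, hh.trans_le hnhi⟩

lemma xseq_four_bounds : 1.3702923282033e-13 < xseq 4 ∧ xseq 4 < 1.3702923282161e-13 := by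
  have h0 : 0.13397459621555 < xseq 0 ∧ xseq 0 < 0.1339745962156 := by
    rw [xseq]
    constructor <;> linarith [sqrt_three_bounds]
  have h1 : 0.024131160666452 < xseq 1 ∧ xseq 1 < 0.024131160666478 := by
    apply xseq_succ_bounds h0 (rlo := 0.71968687109809) (rhi := 0.71968687109826) <;> norm_num
  have h2 : 0.00060809904839105 < xseq 2 ∧ xseq 2 < 0.00060809904839243 := by
    apply xseq_succ_bounds h1 (rlo := 0.95698740558326) (rhi := 0.95698740558332) <;> norm_num
  have h3 : 3.7017447908050e-7 < xseq 3 ∧ xseq 3 < 3.7017447908221e-7 := by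
    apply xseq_succ_bounds h2 (rlo := 0.99894600120318) (rhi := 0.99894600120320) <;> norm_num
  apply xseq_succ_bounds h3 (rlo := 0.99999935883871) (rhi := 0.99999935883873) <;> norm_num

lemma xseq_five_bounds : 1.8777010647331e-26 < xseq 5 ∧ xseq 5 < 1.8777010647684e-26 := by
  apply xseq_succ_bounds xseq_four_bounds (rlo := 0.99999999999975) (rhi := 0.99999999999977) <;>
    norm_num

lemma dseq_bounds {i : ℕ} (hx : 0 ≤ xseq i) (hy : 0 ≤ xseq (i + 1)) :
    xseq i ≤ dseq i ∧ dseq i ≤ xseq i + 2 * xseq (i + 1) := by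
  have hc0 : 0 ≤ √3 / 2 := by positivity
  have hc1 : √3 / 2 ≤ 1 := by linarith [sqrt_three_bounds.2]
  have hc2 : (√3 / 2) ^ 2 = 3 / 4 := by rw [div_pow, sq_sqrt zero_le_three]; norm_num
  have hxy := mul_nonneg hx hy
  unfold dseq
  constructor
  · exact le_sqrt_of_sq_le (by nlinarith [mul_nonneg hxy hc0])
  · exact sqrt_le_iff.mpr ⟨by positivity, by nlinarith [mul_nonneg hxy (sub_nonneg.mpr hc1)]⟩

lemma θseq_bounds {i : ℕ} (hd : dseq i ≤ 2) :
    dseq i ≤ θseq i ∧ θseq i ≤ dseq i + dseq i ^ 3 / 4 := by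
  have h0 : 0 ≤ dseq i / 2 := by unfold dseq; positivity
  have h1 : dseq i / 2 ≤ 1 := by linarith
  unfold θseq
  constructor
  · linarith [self_le_arcsin h0 h1]
  · linarith [arcsin_le_self_add_pow_three h0 h1]

lemma θseq_four_bounds : 1.3702923282033e-13 < θseq 4 ∧ θseq 4 < 1.3702923282166e-13 := by
  obtain ⟨hx4l, hx4h⟩ := xseq_four_bounds
  obtain ⟨hx5l, hx5h⟩ := xseq_five_bounds
  obtain ⟨hdl, hdh⟩ : xseq 4 ≤ dseq 4 ∧ dseq 4 ≤ xseq 4 + 2 * xseq 5 :=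
    dseq_bounds (by linarith) (by linarith)
  obtain ⟨hθl, hθh⟩ := θseq_bounds (i := 4) (by linarith)
  have hd3 : dseq 4 ^ 3 ≤ 1e-36 :=
    calc dseq 4 ^ 3 ≤ 2e-13 ^ 3 := pow_le_pow_left₀ (by linarith) (by linarith) 3
      _ ≤ 1e-36 := by norm_num
  constructor <;> linarith

/-- Bounds on the area `a₄` in Hansen's construction. -/
theorem hansen_a4_area : 4.288e-40 < aseq 4 ∧ aseq 4 < 4.289e-40 := by
  obtain ⟨hx4l, hx4h⟩ := xseq_four_bounds
  obtain ⟨hx5l, hx5h⟩ := xseq_five_bounds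
  obtain ⟨hθl, hθh⟩ := θseq_four_bounds
  have hθ0 : 0 < θseq 4 := by linarith
  have hcube_lo : 1.3702923282033e-13 ^ 3 < θseq 4 ^ 3 :=
    pow_lt_pow_left₀ hθl (by norm_num) (by norm_num)
  have hcube_hi : θseq 4 ^ 3 < 1.3702923282166e-13 ^ 3 := pow_lt_pow_left₀ hθh hθ0.le (by norm_num)
  have hquint : θseq 4 ^ 5 < 1e-60 :=
    calc θseq 4 ^ 5 < 1.3702923282166e-13 ^ 5 := pow_lt_pow_left₀ hθh hθ0.le (by norm_num)
      _ ≤ 1e-60 := by norm_num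
  have hsin_lo := sin_gt_sub_cube hθ0
  have hsin_hi := sin_le_sub_cube_add_pow_five hθ0.le (by linarith)
  have hprod_lo : 1.3702923282033e-13 * 1.8777010647331e-26 < xseq 4 * xseq 5 :=
    mul_lt_mul'' hx4l hx5l (by norm_num) (by norm_num)
  have hprod_hi : xseq 4 * xseq 5 < 1.3702923282161e-13 * 1.8777010647684e-26 :=
    mul_lt_mul'' hx4h hx5h (by linarith) (by linarith)
  unfold aseq
  constructor <;> linarith
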